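/- arXiv:1909.05020 — 2 statements merged into one kernel-verified Lean document; each statement's English description precedes it below -/
import Mathlib

section
/- Let {z_k} be a non-negative real sequence satisfying z_{k+1} ≤ (1 − r₁(k)) z_k + r₂(k) for all k ≥ 0, where {r₁(k)} and {r₂(k)} are sequences with a₁/(k+1)^{ε₁} ≤ r₁(k) ≤ 1 and r₂(k) ≤ a₂/(k+1)^{ε₂}, for constants a₁ > 0, a₂ > 0, 0 ≤ ε₁ < 1, and ε₁ < ε₂. Then (k+1)^{ε₀} z_k → 0 as k → ∞ for every ε₀ with 0 ≤ ε₀ < ε₂ − ε₁. -/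
open Real Filter

lemma rpow_diff_le (x δ : ℝ) (hx : 1 ≤ x) (hδ : 0 ≤ δ) :
    x ^ (-δ) - (x + 1) ^ (-δ) ≤ δ * x ^ (-δ - 1) := by
  have hx0 : (0:ℝ) < x := lt_of_lt_of_le one_pos hx
  have hx1 : (0:ℝ) < x + 1 := by linarith
  set t : ℝ := x / (x + 1) with ht
  have ht0 : 0 < t := div_pos hx0 hx1
  have ht1 : t ≤ 1 := by
    rw [div_le_one hx1]; linarith
  have hB : 1 + (δ + 1) * (t - 1) ≤ t ^ (δ + 1) := by
    have := one_add_mul_self_le_rpow_one_add (s := t - 1) (by linarith) (p := δ + 1) (by linarith)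
    simpa using this
  have key : 1 - t ^ δ ≤ δ * (1 - t) / t := by
    have htδ1 : t ^ (δ + 1) = t ^ δ * t := by
      rw [Real.rpow_add ht0, Real.rpow_one]
    rw [le_div_iff₀ ht0]
    nlinarith [Real.rpow_nonneg (le_of_lt ht0) δ]
  have hxδ : (0:ℝ) < x ^ (-δ) := Real.rpow_pos_of_pos hx0 _
  have h1 : x ^ (-δ) * (t ^ δ) = (x + 1) ^ (-δ) := by
    rw [ht, Real.div_rpow (le_of_lt hx0) (le_of_lt hx1), Real.rpow_neg (le_of_lt hx0),
      Real.rpow_neg (le_of_lt hx1)]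
    field_simp
  have h2 : δ * (1 - t) / t = δ / x := by
    rw [ht]; field_simp; ring
  have h3 : x ^ (-δ) * (δ / x) = δ * x ^ (-δ - 1) := by
    rw [Real.rpow_sub hx0, Real.rpow_one]
    field_simp
  have := mul_le_mul_of_nonneg_left key (le_of_lt hxδ)
  rw [mul_sub, mul_one, h1, h2, h3] at this
  linarith


/-- Lemma 3 (from Kar et al.): decay of a non-negative sequence satisfying a
perturbed contraction recursion with polynomially decaying coefficients. -/
theorem decaying_recursion (z r₁ r₂ : ℕ → ℝ) (a₁ a₂ ε₁ ε₂ : ℝ)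
    (hz : ∀ k, 0 ≤ z k)
    (hrec : ∀ k, z (k + 1) ≤ (1 - r₁ k) * z k + r₂ k)
    (ha₁ : 0 < a₁) (ha₂ : 0 < a₂)
    (hε₁0 : 0 ≤ ε₁) (hε₁1 : ε₁ < 1) (hε₁₂ : ε₁ < ε₂)
    (hr₁lb : ∀ k : ℕ, a₁ / ((k : ℝ) + 1) ^ ε₁ ≤ r₁ k)
    (hr₁ub : ∀ k : ℕ, r₁ k ≤ 1)
    (hr₂ : ∀ k : ℕ, r₂ k ≤ a₂ / ((k : ℝ) + 1) ^ ε₂) :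
    ∀ ε₀ : ℝ, 0 ≤ ε₀ → ε₀ < ε₂ - ε₁ →
      Filter.Tendsto (fun k : ℕ => ((k : ℝ) + 1) ^ ε₀ * z k) Filter.atTop (nhds 0) := by
  intro ε₀ hε₀0 hε₀
  set δ : ℝ := (ε₀ + (ε₂ - ε₁)) / 2 with hδdef
  have hδ0 : 0 < δ := by rw [hδdef]; linarith
  have hε₀δ : ε₀ < δ := by rw [hδdef]; linarith
  have hδlt : δ < ε₂ - ε₁ := by rw [hδdef]; linarith
  set η : ℝ := ε₂ - ε₁ - δ with hηdef
  have hη : 0 < η := by rw [hηdef]; linarith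
  -- basic positivity facts
  have hX1 : ∀ k : ℕ, (1:ℝ) ≤ (k:ℝ) + 1 := by
    intro k; have : (0:ℝ) ≤ (k:ℝ) := Nat.cast_nonneg k; linarith
  have hX0 : ∀ k : ℕ, (0:ℝ) < (k:ℝ) + 1 := fun k => lt_of_lt_of_le one_pos (hX1 k)
  -- rewrite the recursion with the explicit bounds, using rpow with negative exponents
  have hdiv : ∀ (k : ℕ) (e : ℝ), a₁ / ((k:ℝ)+1) ^ e = a₁ * ((k:ℝ)+1) ^ (-e) := by
    intro k e
    rw [Real.rpow_neg (le_of_lt (hX0 k))]; ring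
  have hdiv2 : ∀ (k : ℕ) (e : ℝ), a₂ / ((k:ℝ)+1) ^ e = a₂ * ((k:ℝ)+1) ^ (-e) := by
    intro k e
    rw [Real.rpow_neg (le_of_lt (hX0 k))]; ring
  have hrec' : ∀ k, z (k+1) ≤ (1 - a₁ * ((k:ℝ)+1) ^ (-ε₁)) * z k + a₂ * ((k:ℝ)+1) ^ (-ε₂) := by
    intro k
    have h1 : (1 - r₁ k) * z k ≤ (1 - a₁ * ((k:ℝ)+1) ^ (-ε₁)) * z k := by
      apply mul_le_mul_of_nonneg_right _ (hz k)
      have := hr₁lb k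
      rw [hdiv k ε₁] at this
      linarith
    have h2 : r₂ k ≤ a₂ * ((k:ℝ)+1) ^ (-ε₂) := by
      have := hr₂ k; rwa [hdiv2 k ε₂] at this
    calc z (k+1) ≤ (1 - r₁ k) * z k + r₂ k := hrec k
      _ ≤ _ := add_le_add h1 h2
  have hpnn : ∀ k : ℕ, 0 ≤ 1 - a₁ * ((k:ℝ)+1) ^ (-ε₁) := by
    intro k
    have := (hr₁lb k).trans (hr₁ub k)
    rw [hdiv k ε₁] at this
    linarith
  -- choose N
  have hθ : ∀ θ:ℝ, 0 < θ → Tendsto (fun k:ℕ => ((k:ℝ)+1) ^ θ) atTop atTop := by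
    intro θ hθp
    exact (tendsto_rpow_atTop hθp).comp
      (tendsto_atTop_add_const_right atTop 1 tendsto_natCast_atTop_atTop)
  have hA : ∀ᶠ k : ℕ in atTop, 2*δ/a₁ ≤ ((k:ℝ)+1) ^ (1-ε₁) :=
    (hθ _ (by linarith)).eventually_ge_atTop _
  have hB : ∀ᶠ k : ℕ in atTop, 2*a₂/a₁ ≤ ((k:ℝ)+1) ^ η :=
    (hθ _ hη).eventually_ge_atTop _
  obtain ⟨N, hN⟩ := (hA.and hB).exists_forall_of_atTop
  set C : ℝ := max 1 (((N:ℝ)+1) ^ δ * z N) with hCdef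
  have hC1 : (1:ℝ) ≤ C := le_max_left _ _
  have hC0 : (0:ℝ) < C := lt_of_lt_of_le one_pos hC1
  -- main induction
  have main : ∀ k, N ≤ k → z k ≤ C * ((k:ℝ)+1) ^ (-δ) := by
    intro k hk
    induction k, hk using Nat.le_induction with
    | base =>
      have hid : ((N:ℝ)+1) ^ (-δ) * ((N:ℝ)+1) ^ δ = 1 := by
        rw [← Real.rpow_add (hX0 N), neg_add_cancel, Real.rpow_zero]
      have hzN : ((N:ℝ)+1) ^ δ * z N ≤ C := le_max_right _ _
      have hpos : (0:ℝ) < ((N:ℝ)+1) ^ (-δ) := Real.rpow_pos_of_pos (hX0 N) _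
      calc z N = ((N:ℝ)+1) ^ (-δ) * (((N:ℝ)+1) ^ δ * z N) := by
            rw [← mul_assoc, hid, one_mul]
        _ ≤ ((N:ℝ)+1) ^ (-δ) * C := mul_le_mul_of_nonneg_left hzN (le_of_lt hpos)
        _ = C * ((N:ℝ)+1) ^ (-δ) := by ring
    | succ k hk ih =>
      obtain ⟨hk1, hk2⟩ := hN k hk
      set X : ℝ := (k:ℝ) + 1 with hXdef
      have hXone : (1:ℝ) ≤ X := hX1 k
      have hXpos : (0:ℝ) < X := hX0 k
      -- identities
      have id1 : X ^ (-δ-1) * X ^ (1-ε₁) = X ^ (-δ-ε₁) := by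
        rw [← Real.rpow_add hXpos]; ring_nf
      have id2 : X ^ (-ε₂) * X ^ η = X ^ (-δ-ε₁) := by
        rw [← Real.rpow_add hXpos, hηdef]; ring_nf
      have id3 : X ^ (-ε₁) * X ^ (-δ) = X ^ (-δ-ε₁) := by
        rw [← Real.rpow_add hXpos]; ring_nf
      have hB1 : (0:ℝ) < X ^ (-δ-ε₁) := Real.rpow_pos_of_pos hXpos _
      have hB2 : (0:ℝ) < X ^ (1-ε₁) := Real.rpow_pos_of_pos hXpos _
      have hB3 : (0:ℝ) < X ^ η := Real.rpow_pos_of_pos hXpos _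
      -- e2 : δ * X^(-δ-1) ≤ (a₁/2) * X^(-δ-ε₁)
      have e2 : δ * X ^ (-δ-1) ≤ (a₁/2) * X ^ (-δ-ε₁) := by
        have h : 2*δ ≤ a₁ * X ^ (1-ε₁) := by
          rw [div_le_iff₀ ha₁] at hk1; linarith
        have hnn : (0:ℝ) ≤ X ^ (-δ-1) := Real.rpow_nonneg (le_of_lt hXpos) _
        nlinarith [mul_le_mul_of_nonneg_right h hnn]
      -- e3 : a₂ * X^(-ε₂) ≤ (a₁/2) * X^(-δ-ε₁)
      have e3 : a₂ * X ^ (-ε₂) ≤ (a₁/2) * X ^ (-δ-ε₁) := by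
        have h : 2*a₂ ≤ a₁ * X ^ η := by
          rw [div_le_iff₀ ha₁] at hk2; linarith
        have hnn : (0:ℝ) ≤ X ^ (-ε₂) := Real.rpow_nonneg (le_of_lt hXpos) _
        nlinarith [mul_le_mul_of_nonneg_right h hnn]
      -- e1 : difference bound
      have e1 : X ^ (-δ) - (X+1) ^ (-δ) ≤ δ * X ^ (-δ-1) :=
        rpow_diff_le X δ hXone (le_of_lt hδ0)
      -- combine
      have step : (1 - a₁ * X ^ (-ε₁)) * (C * X ^ (-δ)) + a₂ * X ^ (-ε₂)
          ≤ C * (X+1) ^ (-δ) := by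
        set s : ℝ := a₁ * C * X ^ (-δ-ε₁) with hsdef
        have F1 : C * X ^ (-δ) - C * (X+1) ^ (-δ) ≤ s / 2 := by
          have h := mul_le_mul_of_nonneg_left (e1.trans e2) (le_of_lt hC0)
          rw [mul_sub] at h
          calc C * X ^ (-δ) - C * (X+1) ^ (-δ) ≤ C * ((a₁/2) * X ^ (-δ-ε₁)) := h
            _ = s / 2 := by rw [hsdef]; ring
        have F2 : a₂ * X ^ (-ε₂) ≤ s / 2 := by
          have hv : (0:ℝ) ≤ (a₁/2) * X ^ (-δ-ε₁) := (mul_pos (half_pos ha₁) hB1).le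
          have h3 : (a₁/2) * X ^ (-δ-ε₁) ≤ s / 2 := by
            calc (a₁/2) * X ^ (-δ-ε₁) = 1 * ((a₁/2) * X ^ (-δ-ε₁)) := by ring
              _ ≤ C * ((a₁/2) * X ^ (-δ-ε₁)) := mul_le_mul_of_nonneg_right hC1 hv
              _ = s / 2 := by rw [hsdef]; ring
          exact e3.trans h3
        have expand : (1 - a₁ * X ^ (-ε₁)) * (C * X ^ (-δ)) + a₂ * X ^ (-ε₂)
            = C * X ^ (-δ) - s + a₂ * X ^ (-ε₂) := by
          rw [hsdef, ← id3]; ring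
        rw [expand]
        linarith
      have hmono : (1 - a₁ * X ^ (-ε₁)) * z k ≤ (1 - a₁ * X ^ (-ε₁)) * (C * X ^ (-δ)) :=
        mul_le_mul_of_nonneg_left ih (hpnn k)
      have hcast : ((k+1:ℕ):ℝ) + 1 = X + 1 := by push_cast; rw [hXdef]
      calc z (k+1) ≤ (1 - a₁ * X ^ (-ε₁)) * z k + a₂ * X ^ (-ε₂) := hrec' k
        _ ≤ (1 - a₁ * X ^ (-ε₁)) * (C * X ^ (-δ)) + a₂ * X ^ (-ε₂) := by linarith
        _ ≤ C * (X+1) ^ (-δ) := step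
        _ = C * (((k+1:ℕ):ℝ)+1) ^ (-δ) := by rw [hcast]
  -- conclusion by squeezing
  have hlim : Tendsto (fun k:ℕ => C * ((k:ℝ)+1) ^ (ε₀-δ)) atTop (nhds 0) := by
    have h1 : Tendsto (fun k:ℕ => ((k:ℝ)+1) ^ (-(δ-ε₀))) atTop (nhds 0) :=
      (tendsto_rpow_neg_atTop (by linarith : 0 < δ - ε₀)).comp
        (tendsto_atTop_add_const_right atTop 1 tendsto_natCast_atTop_atTop)
    have h2 := h1.const_mul C
    rw [mul_zero] at h2
    convert h2 using 2 with k
    ring_nf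
  apply squeeze_zero' ?_ ?_ hlim
  · exact Eventually.of_forall fun k =>
      mul_nonneg (Real.rpow_nonneg (le_of_lt (hX0 k)) _) (hz k)
  · filter_upwards [eventually_ge_atTop N] with k hk
    have h := main k hk
    have hnn : (0:ℝ) ≤ ((k:ℝ)+1) ^ ε₀ := Real.rpow_nonneg (le_of_lt (hX0 k)) _
    have id4 : ((k:ℝ)+1) ^ ε₀ * ((k:ℝ)+1) ^ (-δ) = ((k:ℝ)+1) ^ (ε₀-δ) := by
      rw [← Real.rpow_add (hX0 k)]; ring_nf
    calc ((k:ℝ)+1) ^ ε₀ * z k ≤ ((k:ℝ)+1) ^ ε₀ * (C * ((k:ℝ)+1) ^ (-δ)) :=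
          mul_le_mul_of_nonneg_left h hnn
      _ = C * (((k:ℝ)+1) ^ ε₀ * ((k:ℝ)+1) ^ (-δ)) := by ring
      _ = C * ((k:ℝ)+1) ^ (ε₀-δ) := by rw [id4]
end

section
/- Let {v_k} be a non-negative real sequence satisfying, for all k ≥ 0, v_{k+1} ≤ (1 + a_k) v_k − u_k + w_k, where a_k ≥ 0, u_k ≥ 0, w_k ≥ 0, Σ_{k=0}^∞ a_k < ∞, and Σ_{k=0}^∞ w_k < ∞. Then the sequence {v_k} converges to some v ≥ 0 and Σ_{k=0}^∞ u_k < ∞. -/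
/-!
Dividing `v k` by `P k = ∏_{j<k} (1 + a j)` removes the growth factor: `y k = v k / P k` satisfies
`y (k+1) + u' k ≤ y k + w' k` with `u' = u / P (·+1)`, `w' = w / P (·+1)`. For such a recursion
`y k + ∑_{j<k} (u' j - w' j)` is non-increasing and bounded below by `-∑ w'`, which gives both the
convergence of `y` and the summability of `u'`. Since `1 ≤ P k ≤ exp (∑ a)` and `P` converges,
both statements transfer back to `v = y * P` and `u`.
-/

open Filter Topology Finset

section NoGrowth

variable {y u w : ℕ → ℝ}

lemma antitone_add_sum_range_sub_sum_range (hrec : ∀ k, y (k + 1) + u k ≤ y k + w k) :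
    Antitone fun n ↦ y n + ∑ j ∈ range n, u j - ∑ j ∈ range n, w j := by
  refine antitone_nat_of_succ_le fun n ↦ ?_
  simp only [sum_range_succ]
  linarith [hrec n]

lemma summable_of_succ_add_le (hy : ∀ k, 0 ≤ y k) (hu : ∀ k, 0 ≤ u k) (hw : ∀ k, 0 ≤ w k)
    (hsw : Summable w) (hrec : ∀ k, y (k + 1) + u k ≤ y k + w k) : Summable u := by
  refine summable_of_sum_range_le hu (c := y 0 + ∑' j, w j) fun n ↦ ?_
  have hmono := antitone_add_sum_range_sub_sum_range hrec (Nat.zero_le n)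
  simp only [sum_range_zero, add_zero, sub_zero] at hmono
  linarith [hy n, hsw.sum_le_tsum (range n) fun j _ ↦ hw j]

lemma exists_tendsto_of_succ_add_le (hy : ∀ k, 0 ≤ y k) (hu : ∀ k, 0 ≤ u k)
    (hw : ∀ k, 0 ≤ w k) (hsw : Summable w) (hrec : ∀ k, y (k + 1) + u k ≤ y k + w k) :
    ∃ l, Tendsto y atTop (𝓝 l) := by
  set z := fun n ↦ y n + ∑ j ∈ range n, u j - ∑ j ∈ range n, w j
  have hz_bdd : BddBelow (Set.range z) := by
    refine ⟨-∑' j, w j, ?_⟩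
    rintro _ ⟨n, rfl⟩
    linarith [hy n, sum_nonneg fun j (_ : j ∈ range n) ↦ hu j,
      hsw.sum_le_tsum (range n) fun j _ ↦ hw j]
  have hz := tendsto_atTop_ciInf (antitone_add_sum_range_sub_sum_range hrec) hz_bdd
  have hsu := summable_of_succ_add_le hy hu hw hsw hrec
  exact ⟨_, ((hz.sub hsu.hasSum.tendsto_sum_nat).add hsw.hasSum.tendsto_sum_nat).congr
    fun n ↦ by ring⟩

end NoGrowth

section GrowthFactor

variable {a : ℕ → ℝ}

lemma one_le_prod_range_one_add (ha : ∀ k, 0 ≤ a k) (n : ℕ) :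
    1 ≤ ∏ j ∈ range n, (1 + a j) :=
  one_le_prod fun j _ ↦ le_add_of_nonneg_right (ha j)

lemma prod_range_one_add_le_exp_tsum (ha : ∀ k, 0 ≤ a k) (hsa : Summable a) (n : ℕ) :
    ∏ j ∈ range n, (1 + a j) ≤ Real.exp (∑' j, a j) :=
  (Real.prod_one_add_le_exp_sum _ ha).trans <|
    Real.exp_le_exp.mpr (hsa.sum_le_tsum _ fun j _ ↦ ha j)

end GrowthFactor

lemma div_mul_add_div_mul_le {x x' c u w p : ℝ} (hp : 0 < p) (hc : 0 < c)
    (h : x' ≤ c * x - u + w) : x' / (p * c) + u / (p * c) ≤ x / p + w / (p * c) := by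
  calc x' / (p * c) + u / (p * c) = (x' + u) / (p * c) := (add_div _ _ _).symm
    _ ≤ (c * x + w) / (p * c) := div_le_div_of_nonneg_right (by linarith) (by positivity)
    _ = x / p + w / (p * c) := by rw [add_div, mul_comm p c, mul_div_mul_left _ _ hc.ne']

/-- Robbins–Siegmund lemma (deterministic form): an almost-supermartingale-type
non-negative sequence converges and the compensator terms are summable. -/
theorem robbins_siegmund (v a u w : ℕ → ℝ)
    (hv : ∀ k, 0 ≤ v k) (ha : ∀ k, 0 ≤ a k) (hu : ∀ k, 0 ≤ u k) (hw : ∀ k, 0 ≤ w k)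
    (hrec : ∀ k, v (k + 1) ≤ (1 + a k) * v k - u k + w k)
    (hsa : Summable a) (hsw : Summable w) :
    (∃ vlim : ℝ, 0 ≤ vlim ∧ Filter.Tendsto v Filter.atTop (nhds vlim)) ∧ Summable u := by
  set P := fun k ↦ ∏ j ∈ range k, (1 + a j)
  have hP1 : ∀ k, 1 ≤ P k := one_le_prod_range_one_add ha
  have hPpos : ∀ k, 0 < P k := fun k ↦ one_pos.trans_le (hP1 k)
  have hstep : ∀ k, v (k + 1) / P (k + 1) + u k / P (k + 1) ≤ v k / P k + w k / P (k + 1) :=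
    fun k ↦ by
      simpa only [P, prod_range_succ] using
        div_mul_add_div_mul_le (hPpos k) (by linarith [ha k]) (hrec k)
  have hy : ∀ k, 0 ≤ v k / P k := fun k ↦ div_nonneg (hv k) (hPpos k).le
  have hu' : ∀ k, 0 ≤ u k / P (k + 1) := fun k ↦ div_nonneg (hu k) (hPpos _).le
  have hw' : ∀ k, 0 ≤ w k / P (k + 1) := fun k ↦ div_nonneg (hw k) (hPpos _).le
  have hsw' : Summable fun k ↦ w k / P (k + 1) :=
    hsw.of_nonneg_of_le hw' fun k ↦ div_le_self (hw k) (hP1 _)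
  obtain ⟨l, hl⟩ := exists_tendsto_of_succ_add_le hy hu' hw' hsw' hstep
  have hv_lim : Tendsto v atTop (𝓝 (l * ∏' j, (1 + a j))) :=
    (hl.mul (Real.multipliable_one_add_of_summable hsa).tendsto_prod_tprod_nat).congr
      fun k ↦ div_mul_cancel₀ _ (hPpos k).ne'
  refine ⟨⟨_, ge_of_tendsto' hv_lim hv, hv_lim⟩, ?_⟩
  refine ((summable_of_succ_add_le hy hu' hw' hsw' hstep).mul_left
    (Real.exp (∑' j, a j))).of_nonneg_of_le hu fun k ↦ ?_
  rw [mul_div_assoc', le_div_iff₀ (hPpos _), mul_comm (Real.exp _)]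
  exact mul_le_mul_of_nonneg_left (prod_range_one_add_le_exp_tsum ha hsa _) (hu k)
end
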